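/- arXiv:nlin/0610041 — 9 statements merged into one kernel-verified Lean document; each statement's English description precedes it below -/
import Mathlib

section
/- The presented group G = ⟨g₀, g₁, g₂ | g₀⁴ = g₁²g₂², g₁⁴ = g₂²g₀², g₂⁴ = g₀²g₁², g₂²g₁²g₀² = 1, g₀³g₁³g₂³ = 1⟩ is finite of order 108. -/
/-- The five relators of the group
`G = ⟨g₀, g₁, g₂ | g₀⁴ = g₁²g₂², g₁⁴ = g₂²g₀², g₂⁴ = g₀²g₁², g₂²g₁²g₀² = 1, g₀³g₁³g₂³ = 1⟩`
as elements of the free group on three generators. -/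
def GRels : Set (FreeGroup (Fin 3)) :=
  { FreeGroup.of 0 ^ 4 * (FreeGroup.of 1 ^ 2 * FreeGroup.of 2 ^ 2)⁻¹,
    FreeGroup.of 1 ^ 4 * (FreeGroup.of 2 ^ 2 * FreeGroup.of 0 ^ 2)⁻¹,
    FreeGroup.of 2 ^ 4 * (FreeGroup.of 0 ^ 2 * FreeGroup.of 1 ^ 2)⁻¹,
    FreeGroup.of 2 ^ 2 * FreeGroup.of 1 ^ 2 * FreeGroup.of 0 ^ 2,
    FreeGroup.of 0 ^ 3 * FreeGroup.of 1 ^ 3 * FreeGroup.of 2 ^ 3 }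

/-!
Writing `a, b, c` for the generators, the relations give `b⁶ = a⁶`, `a¹⁸ = 1`, `b a⁷ = a b`
(so `b a = a¹³ b`) and `c = (a³b³)⁻¹ b²a²`. Hence `G` is generated by `a` and `b`, and every
element is `aᵐ bⁿ` with `m < 18` and `n < 6`, so `|G| ≤ 108`.
These 108 products stay distinct in a homomorphic image of `G` inside
`(ℤ/2)² × Sym(ℤ/9)`, where `a, b, c` act on `ℤ/9` by the affine maps `s + 1, 4s + 1, 7s + 4`.
-/

theorem pow_mul_pow_eq_of_mul_eq {M : Type*} [Monoid M] {a b : M} {k : ℕ}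
    (h : b * a = a ^ k * b) (m n : ℕ) :
    b ^ n * a ^ m = a ^ (k ^ n * m) * b ^ n := by
  suffices SemiconjBy (b ^ n) (a ^ m) (a ^ (k ^ n * m)) from this.eq
  induction n with
  | zero => simp
  | succ n ih =>
    have hb : SemiconjBy b (a ^ (k ^ n * m)) (a ^ (k ^ (n + 1) * m)) := by
      rw [show k ^ (n + 1) * m = k * (k ^ n * m) by ring, pow_mul a k]
      exact SemiconjBy.pow_right h _
    rw [pow_succ']
    exact hb.mul_left ih

section Metacyclic

variable {G : Type*} [Group G] {a b : G} {k : ℕ}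

theorem exists_eq_pow_mul_pow_of_mul_eq (h : b * a = a ^ k * b) (ha : IsOfFinOrder a)
    (hb : IsOfFinOrder b) {x : G} (hx : x ∈ Subgroup.closure {a, b}) :
    ∃ m n : ℕ, x = a ^ m * b ^ n := by
  let normalForms : Submonoid G :=
    { carrier := {x | ∃ m n : ℕ, x = a ^ m * b ^ n}
      one_mem' := ⟨0, 0, by simp⟩
      mul_mem' := by
        rintro _ _ ⟨m, n, rfl⟩ ⟨m', n', rfl⟩
        refine ⟨m + k ^ n * m', n + n', ?_⟩
        rw [mul_assoc, ← mul_assoc (b ^ n), pow_mul_pow_eq_of_mul_eq h, pow_add, pow_add]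
        simp only [mul_assoc] }
  have hle : Submonoid.closure {a, b} ≤ normalForms := by
    rw [Submonoid.closure_le, Set.insert_subset_iff, Set.singleton_subset_iff]
    exact ⟨⟨1, 0, by simp⟩, ⟨0, 1, by simp⟩⟩
  rw [← Subgroup.mem_toSubmonoid, Subgroup.closure_toSubmonoid_of_isOfFinOrder (by simp [ha, hb])]
    at hx
  exact hle hx

theorem surjective_pow_mul_pow {p q r : ℕ} [NeZero p] [NeZero q] (h : b * a = a ^ k * b)
    (ha : a ^ p = 1) (hb : b ^ q = a ^ r) (hgen : Subgroup.closure {a, b} = ⊤) :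
    Function.Surjective fun t : ZMod p × ZMod q ↦ a ^ t.1.val * b ^ t.2.val := by
  have ha' : IsOfFinOrder a := isOfFinOrder_iff_pow_eq_one.mpr ⟨p, NeZero.pos p, ha⟩
  have hb' : IsOfFinOrder b := isOfFinOrder_iff_pow_eq_one.mpr
    ⟨q * p, Nat.mul_pos (NeZero.pos q) (NeZero.pos p), by
      rw [pow_mul, hb, ← pow_mul, mul_comm, pow_mul, ha, one_pow]⟩
  intro x
  obtain ⟨m, n, rfl⟩ := exists_eq_pow_mul_pow_of_mul_eq h ha' hb' (hgen ▸ Subgroup.mem_top x)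
  refine ⟨((m + r * (n / q) : ℕ), (n : ZMod q)), ?_⟩
  dsimp only
  rw [ZMod.val_natCast, ZMod.val_natCast, ← pow_eq_pow_mod _ ha, pow_add, pow_mul, ← hb,
    mul_assoc, ← pow_mul, ← pow_add, Nat.div_add_mod]

end Metacyclic

namespace GRels

section Consequences

variable {G : Type*} [Group G] {a b c : G}

theorem inv_sq_eq (h₄ : c ^ 2 * b ^ 2 * a ^ 2 = 1) : (c ^ 2)⁻¹ = b ^ 2 * a ^ 2 :=
  inv_eq_of_mul_eq_one_right (by rw [← mul_assoc, h₄])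

theorem pow_six_eq (h₁ : a ^ 4 = b ^ 2 * c ^ 2) (h₂ : b ^ 4 = c ^ 2 * a ^ 2) :
    b ^ 6 = a ^ 6 :=
  calc b ^ 6 = b ^ 2 * c ^ 2 * a ^ 2 := by rw [mul_assoc, ← h₂, ← pow_add]
    _ = a ^ 6 := by rw [← h₁, ← pow_add]

theorem pow_eighteen_eq_one (h₁ : a ^ 4 = b ^ 2 * c ^ 2) (h₂ : b ^ 4 = c ^ 2 * a ^ 2)
    (h₄ : c ^ 2 * b ^ 2 * a ^ 2 = 1) : a ^ 18 = 1 := by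
  have h₆ := pow_six_eq h₁ h₂
  have : a ^ 12 = (a ^ 6)⁻¹ :=
    calc a ^ 12 = (a ^ 4) ^ 3 := by rw [← pow_mul]
      _ = (b ^ 2 * (a ^ 2)⁻¹ * (b ^ 2)⁻¹) ^ 3 := by
        rw [h₁, ← inv_inv (c ^ 2), inv_sq_eq h₄]; group
      _ = b ^ 2 * (b ^ 6)⁻¹ * (b ^ 2)⁻¹ := by rw [conj_pow, h₆]; group
      _ = (a ^ 6)⁻¹ := by rw [← h₆]; group
  rw [show 18 = 12 + 6 by rfl, pow_add, this, inv_mul_cancel]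

theorem mul_pow_seven (h₁ : a ^ 4 = b ^ 2 * c ^ 2) (h₂ : b ^ 4 = c ^ 2 * a ^ 2)
    (h₄ : c ^ 2 * b ^ 2 * a ^ 2 = 1) (h₅ : a ^ 3 * b ^ 3 * c ^ 3 = 1) : b * a ^ 7 = a * b := by
  have ha : (a ^ 2)⁻¹ = c ^ 2 * b ^ 2 := inv_eq_of_mul_eq_one_left h₄
  have hbc : b ^ 3 * c ^ 3 = (a ^ 3)⁻¹ := eq_inv_of_mul_eq_one_right (by rw [← mul_assoc, h₅])
  calc b * a ^ 7 = b * (b ^ 2 * c ^ 2) * a ^ 3 := by rw [← h₁]; group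
    _ = b ^ 3 * c⁻¹ * (b ^ 4)⁻¹ * b := by rw [← inv_inv (a ^ 3), ← hbc]; group
    _ = b ^ 3 * c⁻¹ * (a ^ 2)⁻¹ * (c ^ 2)⁻¹ * b := by rw [h₂]; group
    _ = b ^ 3 * c * b ^ 4 * a ^ 2 * b := by rw [ha, inv_sq_eq h₄]; group
    _ = (b ^ 3 * c ^ 3) * a ^ 4 * b := by rw [h₂]; group
    _ = a * b := by rw [hbc]; group

theorem mul_eq_pow_thirteen_mul (h₁ : a ^ 4 = b ^ 2 * c ^ 2) (h₂ : b ^ 4 = c ^ 2 * a ^ 2)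
    (h₄ : c ^ 2 * b ^ 2 * a ^ 2 = 1) (h₅ : a ^ 3 * b ^ 3 * c ^ 3 = 1) :
    b * a = a ^ 13 * b := by
  have h : SemiconjBy b (a ^ 7) a := mul_pow_seven h₁ h₂ h₄ h₅
  have ha : (a ^ 7) ^ 13 = a := by
    rw [← pow_mul, pow_eq_pow_mod _ (pow_eighteen_eq_one h₁ h₂ h₄), pow_one]
  simpa only [ha] using (h.pow_right 13).eq

theorem mem_closure_pair (h₄ : c ^ 2 * b ^ 2 * a ^ 2 = 1) (h₅ : a ^ 3 * b ^ 3 * c ^ 3 = 1) :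
    c ∈ Subgroup.closure {a, b} := by
  have hc : c = (a ^ 3 * b ^ 3)⁻¹ * (b ^ 2 * a ^ 2) := by
    rw [inv_eq_of_mul_eq_one_right h₅, ← inv_sq_eq h₄]
    group
  have ha : a ∈ Subgroup.closure {a, b} := Subgroup.subset_closure (by simp)
  have hb : b ∈ Subgroup.closure {a, b} := Subgroup.subset_closure (by simp)
  rw [hc]
  exact mul_mem (inv_mem (mul_mem (pow_mem ha 3) (pow_mem hb 3)))
    (mul_mem (pow_mem hb 2) (pow_mem ha 2))

end Consequences

abbrev gen (i : Fin 3) : PresentedGroup GRels := PresentedGroup.of i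

theorem gen_relations :
    gen 0 ^ 4 = gen 1 ^ 2 * gen 2 ^ 2 ∧ gen 1 ^ 4 = gen 2 ^ 2 * gen 0 ^ 2 ∧
      gen 2 ^ 2 * gen 1 ^ 2 * gen 0 ^ 2 = 1 ∧ gen 0 ^ 3 * gen 1 ^ 3 * gen 2 ^ 3 = 1 := by
  have h := fun r (hr : r ∈ GRels) ↦ PresentedGroup.one_of_mem hr
  rw [GRels] at h
  simp only [Set.forall_mem_insert, Set.mem_singleton_iff, forall_eq, map_mul, map_pow, map_inv,
    mul_inv_eq_one] at h
  exact ⟨h.1, h.2.1, h.2.2.2.1, h.2.2.2.2⟩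

theorem closure_gen_pair_eq_top : Subgroup.closure {gen 0, gen 1} = ⊤ := by
  obtain ⟨-, -, h₄, h₅⟩ := gen_relations
  rw [eq_top_iff, ← PresentedGroup.closure_range_of, Subgroup.closure_le]
  rintro _ ⟨i, rfl⟩
  fin_cases i
  · exact Subgroup.subset_closure (by simp)
  · exact Subgroup.subset_closure (by simp)
  · exact mem_closure_pair h₄ h₅

def modelGen : Fin 3 → Multiplicative (ZMod 2 × ZMod 2) × Equiv.Perm (ZMod 9) :=
  ![(.ofAdd (1, 0), ⟨(· + 1), (· + 8), by decide, by decide⟩),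
    (.ofAdd (0, 1), ⟨(4 * · + 1), (7 * · + 2), by decide, by decide⟩),
    (.ofAdd (1, 1), ⟨(7 * · + 4), (4 * · + 2), by decide, by decide⟩)]

theorem modelGen_relations : ∀ r ∈ GRels, FreeGroup.lift modelGen r = 1 := by
  simp only [GRels, Set.mem_insert_iff, Set.mem_singleton_iff, forall_eq_or_imp, forall_eq,
    map_mul, map_pow, map_inv, FreeGroup.lift_apply_of]
  decide

set_option maxRecDepth 40000 in
theorem injective_modelGen_pow_mul_pow :
    Function.Injective fun t : ZMod 18 × ZMod 6 ↦ modelGen 0 ^ t.1.val * modelGen 1 ^ t.2.val := by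
  decide

end GRels

open GRels

/-- The presented group `G` is finite of order 108. -/
theorem presentedGroup_card_eq_108 :
    Finite (PresentedGroup GRels) ∧ Nat.card (PresentedGroup GRels) = 108 := by
  obtain ⟨h₁, h₂, h₄, h₅⟩ := gen_relations
  set f := fun t : ZMod 18 × ZMod 6 ↦ gen 0 ^ t.1.val * gen 1 ^ t.2.val
  have hsurj : Function.Surjective f :=
    surjective_pow_mul_pow (mul_eq_pow_thirteen_mul h₁ h₂ h₄ h₅) (pow_eighteen_eq_one h₁ h₂ h₄)
      (pow_six_eq h₁ h₂) closure_gen_pair_eq_top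
  have hinj : Function.Injective f := by
    refine Function.Injective.of_comp (f := PresentedGroup.toGroup modelGen_relations) ?_
    convert injective_modelGen_pow_mul_pow using 1
    ext1 t
    simp [f, PresentedGroup.toGroup.of]
  have e := Equiv.ofBijective f ⟨hinj, hsurj⟩
  exact ⟨Finite.of_equiv _ e, by rw [← Nat.card_congr e]; simp⟩
end

section
/- If g₀, g₁, g₂ are elements of a group satisfying the G-relations, then g₀⁶ = g₁⁶ = g₂⁶. -/
/-- Elements `g₀, g₁, g₂` of a group satisfy the G-relations if
`g₀⁴ = g₁²g₂²`, `g₁⁴ = g₂²g₀²`, `g₂⁴ = g₀²g₁²`, `g₂²g₁²g₀² = 1` and `g₀³g₁³g₂³ = 1`. -/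
def GRelations {G : Type*} [Group G] (g₀ g₁ g₂ : G) : Prop :=
  g₀ ^ 4 = g₁ ^ 2 * g₂ ^ 2 ∧ g₁ ^ 4 = g₂ ^ 2 * g₀ ^ 2 ∧ g₂ ^ 4 = g₀ ^ 2 * g₁ ^ 2 ∧
    g₂ ^ 2 * g₁ ^ 2 * g₀ ^ 2 = 1 ∧ g₀ ^ 3 * g₁ ^ 3 * g₂ ^ 3 = 1

/-- If g0, g1, g2 satisfy the G-relations then g0^6 = g1^6 = g2^6. -/
theorem sixth_powers_eq {G : Type*} [Group G] (g₀ g₁ g₂ : G)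
    (h : GRelations g₀ g₁ g₂) : g₀ ^ 6 = g₁ ^ 6 ∧ g₁ ^ 6 = g₂ ^ 6 := by
  obtain ⟨h1, h2, h3, -, -⟩ := h
  constructor
  · calc g₀ ^ 6 = g₀ ^ 4 * g₀ ^ 2 := by group
    _ = g₁ ^ 2 * (g₂ ^ 2 * g₀ ^ 2) := by rw [h1]; group
    _ = g₁ ^ 2 * g₁ ^ 4 := by rw [h2]
    _ = g₁ ^ 6 := by group
  · calc g₁ ^ 6 = g₁ ^ 4 * g₁ ^ 2 := by group
    _ = g₂ ^ 2 * (g₀ ^ 2 * g₁ ^ 2) := by rw [h2]; group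
    _ = g₂ ^ 2 * g₂ ^ 4 := by rw [h3]
    _ = g₂ ^ 6 := by group
end

section
/- If g₀, g₁, g₂ are elements of a group satisfying the G-relations, then for all i, j ∈ {0,1,2} the element gᵢ commutes with gⱼ⁶, i.e. gᵢ · gⱼ⁶ = gⱼ⁶ · gᵢ. -/
/-- If g0, g1, g2 satisfy the G-relations then each gi commutes with each gj^6. -/
theorem commute_with_sixth_powers {G : Type*} [Group G] (g₀ g₁ g₂ : G)
    (h : GRelations g₀ g₁ g₂) :
    ∀ gi ∈ ({g₀, g₁, g₂} : Set G), ∀ gj ∈ ({g₀, g₁, g₂} : Set G),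
      gi * gj ^ 6 = gj ^ 6 * gi := by
  obtain ⟨h1, h2, h3, -, -⟩ := h
  have e01 : g₀ ^ 6 = g₁ ^ 6 := by
    calc g₀ ^ 6 = g₀ ^ 4 * g₀ ^ 2 := by group
    _ = g₁ ^ 2 * (g₂ ^ 2 * g₀ ^ 2) := by rw [h1]; group
    _ = g₁ ^ 2 * g₁ ^ 4 := by rw [← h2]
    _ = g₁ ^ 6 := by group
  have e12 : g₁ ^ 6 = g₂ ^ 6 := by
    calc g₁ ^ 6 = g₁ ^ 4 * g₁ ^ 2 := by group
    _ = g₂ ^ 2 * (g₀ ^ 2 * g₁ ^ 2) := by rw [h2]; group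
    _ = g₂ ^ 2 * g₂ ^ 4 := by rw [← h3]
    _ = g₂ ^ 6 := by group
  have key : ∀ x ∈ ({g₀, g₁, g₂} : Set G), x ^ 6 = g₀ ^ 6 := by
    rintro x (rfl | rfl | rfl)
    · rfl
    · exact e01.symm
    · rw [← e12, e01]
  intro gi hgi gj hgj
  rw [key gj hgj, ← key gi hgi]
  group
end

section
/- If g₀, g₁, g₂ are elements of a group satisfying the G-relations, then g₀¹⁸ = 1, g₁¹⁸ = 1 and g₂¹⁸ = 1. -/
private lemma aux_ninth {G : Type*} [Group G] (a b c : G)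
    (ha : a ^ 2 = b * c) (hb : b ^ 2 = c * a) (h4 : c * b * a = 1) :
    a ^ 9 = 1 ∧ b ^ 9 = 1 := by
  have hc : c = a⁻¹ * b⁻¹ := by
    rw [show a⁻¹ * b⁻¹ = (b * a)⁻¹ by group, eq_inv_iff_mul_eq_one, ← mul_assoc]
    exact h4
  have ha2 : a ^ 2 = b * (a⁻¹ * b⁻¹) := by rw [ha, hc]
  have hb2 : b ^ 2 = a⁻¹ * (b⁻¹ * a) := by rw [hb, hc]; group
  have hainv : a⁻¹ * a⁻¹ = b * (a * b⁻¹) := by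
    rw [show a⁻¹ * a⁻¹ = (a ^ 2)⁻¹ by group, ha2]; group
  have hbbinv : b⁻¹ * b⁻¹ = a⁻¹ * (b * a) := by
    rw [show b⁻¹ * b⁻¹ = (b ^ 2)⁻¹ by group, hb2]; group
  have hbb : b * b = a⁻¹ * (b⁻¹ * a) := by rw [← hb2, sq]
  have e1 : a⁻¹ * b * a = (b ^ 2)⁻¹ := by rw [hb2]; group
  have e3 : a ^ 4 = b * (b * (a * b⁻¹)) * b⁻¹ := by
    calc a ^ 4 = (a ^ 2) * (a ^ 2) := by group
      _ = (b * (a⁻¹ * b⁻¹)) * (b * (a⁻¹ * b⁻¹)) := by rw [ha2]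
      _ = b * (a⁻¹ * a⁻¹) * b⁻¹ := by group
      _ = b * (b * (a * b⁻¹)) * b⁻¹ := by rw [hainv]
  have e4 : a ^ 4 = a⁻¹ * b⁻¹ * a * b * a := by
    calc a ^ 4 = b * (b * (a * b⁻¹)) * b⁻¹ := e3
      _ = (b * b) * a * (b⁻¹ * b⁻¹) := by group
      _ = (b * b) * a * (a⁻¹ * (b * a)) := by rw [hbbinv]
      _ = (a⁻¹ * (b⁻¹ * a)) * a * (a⁻¹ * (b * a)) := by rw [hbb]
      _ = a⁻¹ * b⁻¹ * a * b * a := by group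
  have einv : a⁻¹ * b⁻¹ * a = b ^ 2 := by
    rw [show a⁻¹ * b⁻¹ * a = (a⁻¹ * b * a)⁻¹ by group, e1]; group
  have key : a ^ 3 = b ^ 3 := by
    have h5 : a ^ 3 * a = b ^ 3 * a := by
      calc a ^ 3 * a = a ^ 4 := by group
        _ = (a⁻¹ * b⁻¹ * a) * b * a := by rw [e4]
        _ = (b ^ 2) * b * a := by rw [einv]
        _ = b ^ 3 * a := by group
    exact mul_right_cancel h5
  have h7 : b ^ 3 = (b ^ 2)⁻¹ * (b ^ 2)⁻¹ * (b ^ 2)⁻¹ := by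
    calc b ^ 3 = a ^ 3 := key.symm
      _ = a⁻¹ * (a ^ 3) * a := by group
      _ = a⁻¹ * (b ^ 3) * a := by rw [key]
      _ = a⁻¹ * (b * b * b) * a := by rw [pow_succ, pow_succ, pow_one]
      _ = (a⁻¹ * b * a) * (a⁻¹ * b * a) * (a⁻¹ * b * a) := by group
      _ = (b ^ 2)⁻¹ * (b ^ 2)⁻¹ * (b ^ 2)⁻¹ := by rw [e1]
  have hb9 : b ^ 9 = 1 := by
    calc b ^ 9 = (b ^ 3) * b ^ 6 := by group
      _ = ((b ^ 2)⁻¹ * (b ^ 2)⁻¹ * (b ^ 2)⁻¹) * b ^ 6 := by rw [h7]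
      _ = 1 := by group
  refine ⟨?_, hb9⟩
  calc a ^ 9 = (a ^ 3) ^ 3 := by group
    _ = (b ^ 3) ^ 3 := by rw [key]
    _ = b ^ 9 := by group
    _ = 1 := hb9

/-- If g0, g1, g2 satisfy the G-relations then g0^18 = g1^18 = g2^18 = 1. -/
theorem eighteenth_powers_eq_one {G : Type*} [Group G] (g₀ g₁ g₂ : G)
    (h : GRelations g₀ g₁ g₂) : g₀ ^ 18 = 1 ∧ g₁ ^ 18 = 1 ∧ g₂ ^ 18 = 1 := by
  obtain ⟨h1, h2, h3, h4, -⟩ := h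
  set a := g₀ ^ 2 with hadef
  set b := g₁ ^ 2 with hbdef
  set c := g₂ ^ 2 with hcdef
  have ha : a ^ 2 = b * c := by rw [hadef, hbdef, hcdef, ← pow_mul]; exact h1
  have hb : b ^ 2 = c * a := by rw [hadef, hbdef, hcdef, ← pow_mul]; exact h2
  have hc : c ^ 2 = a * b := by rw [hadef, hbdef, hcdef, ← pow_mul]; exact h3
  have h4' : c * b * a = 1 := h4
  have h4'' : a * c * b = 1 := by
    have hcb : c * b = a⁻¹ := by
      rw [eq_inv_iff_mul_eq_one]; exact h4'
    rw [mul_assoc, hcb, mul_inv_cancel]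
  obtain ⟨ha9, hb9⟩ := aux_ninth a b c ha hb h4'
  obtain ⟨-, hc9⟩ := aux_ninth b c a hb hc h4''
  refine ⟨?_, ?_, ?_⟩
  · calc g₀ ^ 18 = (g₀ ^ 2) ^ 9 := by group
      _ = 1 := ha9
  · calc g₁ ^ 18 = (g₁ ^ 2) ^ 9 := by group
      _ = 1 := hb9
  · calc g₂ ^ 18 = (g₂ ^ 2) ^ 9 := by group
      _ = 1 := hc9
end

section
/- In the presented group G = ⟨g₀, g₁, g₂ | g₀⁴ = g₁²g₂², g₁⁴ = g₂²g₀², g₂⁴ = g₀²g₁², g₂²g₁²g₀² = 1, g₀³g₁³g₂³ = 1⟩, each of the images of the three generators g₀, g₁, g₂ has order exactly 18. -/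
theorem pow_nine_eq_one_of_sq_eq_mul {G : Type*} [Group G] {x y z : G}
    (hx : x ^ 2 = y * z) (hy : y ^ 2 = z * x) (hzyx : z * y * x = 1) : x ^ 9 = 1 := by
  have hz : z = x⁻¹ * y⁻¹ := by
    rw [← mul_inv_rev]
    exact eq_inv_of_mul_eq_one_left (by rwa [← mul_assoc])
  have hconj : MulAut.conj y x = x ^ (-2 : ℤ) := by
    rw [MulAut.conj_apply, zpow_neg, zpow_two, ← sq, hx, hz]
    group
  have hy3 : y ^ 3 = x ^ 3 := by
    rw [pow_succ', hy, ← mul_assoc, ← hx, ← pow_succ]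
  have hconj3 : (MulAut.conj y ^ 3) x = x ^ (-8 : ℤ) := by
    simp only [pow_succ, MulAut.mul_apply, pow_zero, MulAut.one_apply, hconj, map_zpow,
      ← zpow_mul]
    norm_num
  have hfix : (MulAut.conj y ^ 3) x = x := by
    rw [← map_pow, hy3, MulAut.conj_apply]
    group
  calc x ^ 9 = x * (x ^ (-8 : ℤ))⁻¹ := by group
    _ = 1 := by rw [← hconj3, hfix, mul_inv_cancel]

def affinePerm {R : Type*} [Ring R] (u : Rˣ) (t : R) : Equiv.Perm R :=
  Equiv.addRight t * Units.mulLeft u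

namespace GRels

open PresentedGroup

theorem of_pow_four (i : Fin 3) :
    (of i : PresentedGroup GRels) ^ 4 = of (i + 1) ^ 2 * of (i + 2) ^ 2 := by
  fin_cases i <;> exact mk_eq_mk_of_mul_inv_mem (by simp [GRels])

theorem of_sq_mul_of_sq_mul_of_sq_eq_one (i : Fin 3) :
    (of (i + 2) : PresentedGroup GRels) ^ 2 * of (i + 1) ^ 2 * of i ^ 2 = 1 := by
  have h : (of 2 : PresentedGroup GRels) ^ 2 * of 1 ^ 2 * of 0 ^ 2 = 1 :=
    one_of_mem (by simp [GRels])
  fin_cases i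
  · exact h
  · exact (mul_assoc _ _ _).trans (mul_eq_one_comm.mp h)
  · exact mul_eq_one_comm.mp ((mul_assoc _ _ _).symm.trans h)

theorem of_pow_eighteen (i : Fin 3) : (of i : PresentedGroup GRels) ^ 18 = 1 := by
  have hy := of_pow_four (i + 1)
  rw [show i + 1 + 1 = i + 2 by omega, show i + 1 + 2 = i by omega] at hy
  rw [show 18 = 2 * 9 from rfl, pow_mul]
  exact pow_nine_eq_one_of_sq_eq_mul (by rw [← pow_mul, of_pow_four]) (by rw [← pow_mul, hy])
    (of_sq_mul_of_sq_mul_of_sq_eq_one i)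

def affineImage : Fin 3 → Equiv.Perm (ZMod 36) :=
  let u : (ZMod 36)ˣ := ⟨31, 7, by decide, by decide⟩
  ![affinePerm 1 2, affinePerm u 2, affinePerm u⁻¹ 8]

theorem lift_affineImage_eq_one : ∀ r ∈ GRels, FreeGroup.lift affineImage r = 1 := by
  simp only [GRels, Set.mem_insert_iff, Set.mem_singleton_iff, forall_eq_or_imp, forall_eq,
    map_mul, map_pow, map_inv, FreeGroup.lift_apply_of]
  decide

set_option maxRecDepth 10000 in
theorem orderOf_affineImage (i : Fin 3) : orderOf (affineImage i) = 18 := by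
  rw [orderOf_eq_iff (by norm_num)]
  fin_cases i <;> decide

end GRels

/-- In the presented group `G`, the image of each generator has order exactly 18. -/
theorem presentedGroup_generators_orderOf_eq_18 :
    ∀ i : Fin 3, orderOf (PresentedGroup.of i : PresentedGroup GRels) = 18 := by
  intro i
  refine Nat.dvd_antisymm (orderOf_dvd_of_pow_eq_one (GRels.of_pow_eighteen i)) ?_
  rw [← GRels.orderOf_affineImage i,
    ← PresentedGroup.toGroup.of GRels.lift_affineImage_eq_one]
  exact orderOf_map_dvd _ _
end

section
/- If g₀, g₁, g₂ are elements of a group satisfying the G-relations, then the cubes commute pairwise: gᵢ³ · gⱼ³ = gⱼ³ · gᵢ³ for all i, j ∈ {0,1,2}. -/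
/-- If g0, g1, g2 satisfy the G-relations then their cubes commute pairwise. -/
theorem cubes_commute {G : Type*} [Group G] (g₀ g₁ g₂ : G)
    (h : GRelations g₀ g₁ g₂) :
    ∀ gi ∈ ({g₀, g₁, g₂} : Set G), ∀ gj ∈ ({g₀, g₁, g₂} : Set G),
      gi ^ 3 * gj ^ 3 = gj ^ 3 * gi ^ 3 := by
  obtain ⟨h1, h2, h3, h4, h5⟩ := h
  have hr1 : g₀ ^ 4 * (g₁ ^ 2 * g₂ ^ 2)⁻¹ = 1 := by rw [h1]; group
  have hr2 : g₁ ^ 4 * (g₂ ^ 2 * g₀ ^ 2)⁻¹ = 1 := by rw [h2]; group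
  have hr3 : g₂ ^ 4 * (g₀ ^ 2 * g₁ ^ 2)⁻¹ = 1 := by rw [h3]; group
  have hr4 : g₂ ^ 2 * g₁ ^ 2 * g₀ ^ 2 = 1 := h4
  have hr5 : g₀ ^ 3 * g₁ ^ 3 * g₂ ^ 3 = 1 := h5
  have hq0 : g₂ ^ 4 * (g₁ ^ 2)⁻¹ * (g₀ ^ 2)⁻¹ = 1 := by
    have e : g₂ ^ 4 * (g₁ ^ 2)⁻¹ * (g₀ ^ 2)⁻¹ = (g₂ ^ 4 * (g₀ ^ 2 * g₁ ^ 2)⁻¹) := by group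
    rw [e, hr3]
  have hq1 : (g₀ ^ 2)⁻¹ * (g₁ ^ 2)⁻¹ * (g₂ ^ 2)⁻¹ = 1 := by
    have e : (g₀ ^ 2)⁻¹ * (g₁ ^ 2)⁻¹ * (g₂ ^ 2)⁻¹ = ((g₂ ^ 2 * g₁ ^ 2 * g₀ ^ 2))⁻¹ := by group
    rw [e, hr4]; group
  have hq2 : g₁ ^ 2 * g₂ ^ 3 * g₀ ^ 3 * g₁ = 1 := by
    have e : g₁ ^ 2 * g₂ ^ 3 * g₀ ^ 3 * g₁ = (g₀ ^ 3 * g₁)⁻¹ * (g₀ ^ 3 * g₁ ^ 3 * g₂ ^ 3) * (g₀ ^ 3 * g₁) := by group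
    rw [e, hr5]; group
  have hq3 : g₀ ^ 2 * (g₂ ^ 2)⁻¹ * (g₁ ^ 2)⁻¹ * g₀ ^ 2 = 1 := by
    have e : g₀ ^ 2 * (g₂ ^ 2)⁻¹ * (g₁ ^ 2)⁻¹ * g₀ ^ 2 = (g₀ ^ 2)⁻¹ * (g₀ ^ 4 * (g₁ ^ 2 * g₂ ^ 2)⁻¹) * (g₀ ^ 2) := by group
    rw [e, hr1]; group
  have hq4 : (g₁ ^ 2)⁻¹ * (g₂ ^ 2)⁻¹ * (g₀ ^ 2)⁻¹ = 1 := by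
    have e : (g₁ ^ 2)⁻¹ * (g₂ ^ 2)⁻¹ * (g₀ ^ 2)⁻¹ = ((g₂ ^ 2 * g₁ ^ 2)⁻¹ * (g₂ ^ 2 * g₁ ^ 2 * g₀ ^ 2) * (g₂ ^ 2 * g₁ ^ 2))⁻¹ := by group
    rw [e, hr4]; group
  have hq5 : g₂ ^ 2 * g₀ ^ 3 * g₁ ^ 3 * g₂ = 1 := by
    have e : g₂ ^ 2 * g₀ ^ 3 * g₁ ^ 3 * g₂ = (g₀ ^ 3 * g₁ ^ 3 * g₂)⁻¹ * (g₀ ^ 3 * g₁ ^ 3 * g₂ ^ 3) * (g₀ ^ 3 * g₁ ^ 3 * g₂) := by group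
    rw [e, hr5]; group
  have hq6 : g₁ ^ 2 * (g₀ ^ 2)⁻¹ * (g₂ ^ 2)⁻¹ * g₁ ^ 2 = 1 := by
    have e : g₁ ^ 2 * (g₀ ^ 2)⁻¹ * (g₂ ^ 2)⁻¹ * g₁ ^ 2 = (g₁ ^ 2)⁻¹ * (g₁ ^ 4 * (g₂ ^ 2 * g₀ ^ 2)⁻¹) * (g₁ ^ 2) := by group
    rw [e, hr2]; group
  have hq7 : g₀⁻¹ * (g₁ ^ 2)⁻¹ * (g₂ ^ 2)⁻¹ * g₀⁻¹ = 1 := by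
    have e : g₀⁻¹ * (g₁ ^ 2)⁻¹ * (g₂ ^ 2)⁻¹ * g₀⁻¹ = ((g₂ ^ 2 * g₁ ^ 2 * g₀)⁻¹ * (g₂ ^ 2 * g₁ ^ 2 * g₀ ^ 2) * (g₂ ^ 2 * g₁ ^ 2 * g₀))⁻¹ := by group
    rw [e, hr4]; group
  have key : g₀ ^ 3 * g₁ ^ 3 * (g₀ ^ 3)⁻¹ * (g₁ ^ 3)⁻¹ = (g₀ * (g₂ ^ 4 * (g₁ ^ 2)⁻¹ * (g₀ ^ 2)⁻¹)⁻¹ * (g₀)⁻¹) * (g₀ * g₂ ^ 2 * ((g₀ ^ 2)⁻¹ * (g₁ ^ 2)⁻¹ * (g₂ ^ 2)⁻¹)⁻¹ * (g₀ * g₂ ^ 2)⁻¹) * (g₀ * g₂ ^ 2 * (g₀ ^ 2)⁻¹ * (g₁ ^ 2 * g₂ ^ 3 * g₀ ^ 3 * g₁)⁻¹ * (g₀ * g₂ ^ 2 * (g₀ ^ 2)⁻¹)⁻¹) * (g₀ * g₂ ^ 2 * (g₀ ^ 2 * (g₂ ^ 2)⁻¹ * (g₁ ^ 2)⁻¹ *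 g₀ ^ 2)⁻¹ * (g₀ * g₂ ^ 2)⁻¹) * (g₀ * g₂ ^ 2 * ((g₁ ^ 2)⁻¹ * (g₂ ^ 2)⁻¹ * (g₀ ^ 2)⁻¹)⁻¹ * (g₀ * g₂ ^ 2)⁻¹) * (g₀ * g₂ ^ 2 * (g₁ ^ 2)⁻¹ * (g₂ ^ 2 * g₀ ^ 3 * g₁ ^ 3 * g₂)⁻¹ * (g₀ * g₂ ^ 2 * (g₁ ^ 2)⁻¹)⁻¹) * (g₀ * g₂ ^ 2 * (g₁ ^ 2 * (g₀ ^ 2)⁻¹ * (g₂ ^ 2)⁻¹ * g₁ ^ 2)⁻¹ * (g₀ * g₂ ^ 2)⁻¹) * ((g₀⁻¹ * (g₁ ^ 2)⁻¹ * (g₂ ^ 2)⁻¹ * g₀⁻¹)⁻¹) := by group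
  rw [hq0, hq1, hq2, hq3, hq4, hq5, hq6, hq7] at key
  have keyc : g₀ ^ 3 * g₁ ^ 3 * (g₀ ^ 3)⁻¹ * (g₁ ^ 3)⁻¹ = 1 := by rw [key]; group
  have c01 : g₀ ^ 3 * g₁ ^ 3 = g₁ ^ 3 * g₀ ^ 3 := by
    have h' : (g₀ ^ 3 * g₁ ^ 3) * (g₁ ^ 3 * g₀ ^ 3)⁻¹ = g₀ ^ 3 * g₁ ^ 3 * (g₀ ^ 3)⁻¹ * (g₁ ^ 3)⁻¹ := by
      group
    rw [keyc] at h'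
    exact mul_inv_eq_one.mp h'
  have hC : g₂ ^ 3 = (g₀ ^ 3 * g₁ ^ 3)⁻¹ := eq_inv_of_mul_eq_one_right h5
  have c02 : g₀ ^ 3 * g₂ ^ 3 = g₂ ^ 3 * g₀ ^ 3 := by
    rw [hC]
    exact (((Commute.refl (g₀ ^ 3)).mul_right (c01 : Commute _ _)).inv_right).eq
  have c12 : g₁ ^ 3 * g₂ ^ 3 = g₂ ^ 3 * g₁ ^ 3 := by
    rw [hC]
    have hcomm : Commute (g₁ ^ 3) (g₀ ^ 3) := c01.symm
    exact (hcomm.mul_right (Commute.refl (g₁ ^ 3))).inv_right.eq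
  intro gi hgi gj hgj
  simp only [Set.mem_insert_iff, Set.mem_singleton_iff] at hgi hgj
  rcases hgi with rfl | rfl | rfl <;> rcases hgj with rfl | rfl | rfl <;>
    first
      | rfl
      | exact c01 | exact c01.symm
      | exact c02 | exact c02.symm
      | exact c12 | exact c12.symm
end

section
/- If g₀, g₁, g₂ are elements of a group satisfying the G-relations, then g₀⁸ = g₂² g₀² g₂⁻², and consequently g₀²⁴ = g₀⁶. -/
/-- The G-relations are invariant under the cyclic shift of the three elements. -/
lemma GRelations.shift {G : Type*} [Group G] {g₀ g₁ g₂ : G}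
    (h : GRelations g₀ g₁ g₂) : GRelations g₁ g₂ g₀ := by
  obtain ⟨h1, h2, h3, h4, h5⟩ := h
  refine ⟨h2, h3, h1, ?_, ?_⟩
  · calc g₀ ^ 2 * g₂ ^ 2 * g₁ ^ 2
        = g₀ ^ 2 * (g₂ ^ 2 * g₁ ^ 2 * g₀ ^ 2) * (g₀ ^ 2)⁻¹ := by group
      _ = g₀ ^ 2 * 1 * (g₀ ^ 2)⁻¹ := by rw [h4]
      _ = 1 := by group
  · calc g₁ ^ 3 * g₂ ^ 3 * g₀ ^ 3
        = (g₀ ^ 3)⁻¹ * (g₀ ^ 3 * g₁ ^ 3 * g₂ ^ 3) * g₀ ^ 3 := by group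
      _ = (g₀ ^ 3)⁻¹ * 1 * g₀ ^ 3 := by rw [h5]
      _ = 1 := by group

/-- Under the G-relations, the first element has order dividing 18. -/
lemma GRelations.pow18 {G : Type*} [Group G] {g₀ g₁ g₂ : G}
    (h : GRelations g₀ g₁ g₂) : g₀ ^ 18 = 1 := by
  obtain ⟨h1, h2, h3, h4, h5⟩ := h
  -- g₁² = g₂⁻² g₀⁻²
  have b2 : g₁ ^ 2 = (g₂ ^ 2)⁻¹ * (g₀ ^ 2)⁻¹ := by
    calc g₁ ^ 2 = (g₂ ^ 2)⁻¹ * (g₂ ^ 2 * g₁ ^ 2 * g₀ ^ 2) * (g₀ ^ 2)⁻¹ := by group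
      _ = (g₂ ^ 2)⁻¹ * 1 * (g₀ ^ 2)⁻¹ := by rw [h4]
      _ = (g₂ ^ 2)⁻¹ * (g₀ ^ 2)⁻¹ := by group
  -- g₀⁴ = g₂⁻² g₀⁻² g₂²
  have e2 : g₀ ^ 4 = (g₂ ^ 2)⁻¹ * (g₀ ^ 2)⁻¹ * g₂ ^ 2 := by rw [h1, b2]
  -- g₂² g₀² = (g₂⁻² g₀⁻²)(g₂⁻² g₀⁻²)
  have e4 : g₂ ^ 2 * g₀ ^ 2
      = (g₂ ^ 2)⁻¹ * (g₀ ^ 2)⁻¹ * ((g₂ ^ 2)⁻¹ * (g₀ ^ 2)⁻¹) := by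
    rw [← h2, show g₁ ^ 4 = g₁ ^ 2 * g₁ ^ 2 from by group, b2]
  set X := g₀ ^ 2 * g₂ ^ 2 with hX
  -- conjugation by g₀² sends X to X⁻²
  have fA : (g₀ ^ 2)⁻¹ * X * g₀ ^ 2 = X⁻¹ * X⁻¹ := by
    have h' : (g₀ ^ 2)⁻¹ * X * g₀ ^ 2 = g₂ ^ 2 * g₀ ^ 2 := by rw [hX]; group
    rw [h', e4, hX]; group
  have fB : X * g₀ ^ 4 = (g₀ ^ 2)⁻¹ * X := by
    rw [hX, e2]; group
  -- hence X³ = g₀⁻⁶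
  have x3 : X ^ 3 = (g₀ ^ 2)⁻¹ ^ 3 := by
    have step : X⁻¹ * X⁻¹ * (g₀ ^ 2)⁻¹ = X * g₀ ^ 4 := by
      rw [← fA, fB]; group
    have key : X ^ 3 * g₀ ^ 4 = (g₀ ^ 2)⁻¹ := by
      calc X ^ 3 * g₀ ^ 4 = X ^ 2 * (X * g₀ ^ 4) := by group
        _ = X ^ 2 * (X⁻¹ * X⁻¹ * (g₀ ^ 2)⁻¹) := by rw [step]
        _ = (g₀ ^ 2)⁻¹ := by group
    calc X ^ 3 = X ^ 3 * g₀ ^ 4 * (g₀ ^ 4)⁻¹ := by group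
      _ = (g₀ ^ 2)⁻¹ * (g₀ ^ 4)⁻¹ := by rw [key]
      _ = (g₀ ^ 2)⁻¹ ^ 3 := by group
  -- conjugating X³ by g₀² gives X⁻⁶, but X³ is a power of g₀, so X⁹ = 1
  have x9 : X ^ 9 = 1 := by
    have c1 : (g₀ ^ 2)⁻¹ * X ^ 3 * g₀ ^ 2
        = (X⁻¹ * X⁻¹) * (X⁻¹ * X⁻¹) * (X⁻¹ * X⁻¹) := by
      calc (g₀ ^ 2)⁻¹ * X ^ 3 * g₀ ^ 2
          = (g₀ ^ 2)⁻¹ * (X * X * X) * g₀ ^ 2 := by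
            rw [show X ^ 3 = X * X * X from by rw [pow_succ, pow_two]]
        _ = ((g₀ ^ 2)⁻¹ * X * g₀ ^ 2) * ((g₀ ^ 2)⁻¹ * X * g₀ ^ 2) *
              ((g₀ ^ 2)⁻¹ * X * g₀ ^ 2) := by group
        _ = (X⁻¹ * X⁻¹) * (X⁻¹ * X⁻¹) * (X⁻¹ * X⁻¹) := by rw [fA]
    have c2 : (g₀ ^ 2)⁻¹ * X ^ 3 * g₀ ^ 2 = X ^ 3 := by
      rw [x3]; group
    have c3 : X ^ 3 = (X⁻¹ * X⁻¹) * (X⁻¹ * X⁻¹) * (X⁻¹ * X⁻¹) := by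
      rw [← c2, c1]
    calc X ^ 9 = X ^ 3 * X ^ 6 := by group
      _ = (X⁻¹ * X⁻¹) * (X⁻¹ * X⁻¹) * (X⁻¹ * X⁻¹) * X ^ 6 := by rw [← c3]
      _ = 1 := by group
  -- conclude
  have final : g₀ ^ 18 = (X ^ 9)⁻¹ := by
    calc g₀ ^ 18 = ((g₀ ^ 2)⁻¹ ^ 3 * (g₀ ^ 2)⁻¹ ^ 3 * (g₀ ^ 2)⁻¹ ^ 3)⁻¹ := by group
      _ = (X ^ 3 * X ^ 3 * X ^ 3)⁻¹ := by rw [← x3]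
      _ = (X ^ 9)⁻¹ := by group
  rw [final, x9]; group

/-- If g0, g1, g2 satisfy the G-relations then g0^8 = g2^2 g0^2 g2^(-2), and consequently g0^24 = g0^6. -/
theorem pow_eight_conj {G : Type*} [Group G] (g₀ g₁ g₂ : G)
    (h : GRelations g₀ g₁ g₂) :
    g₀ ^ 8 = g₂ ^ 2 * g₀ ^ 2 * g₂⁻¹ ^ 2 ∧ g₀ ^ 24 = g₀ ^ 6 := by
  have ha18 : g₀ ^ 18 = 1 := h.pow18
  have hc18 : g₂ ^ 18 = 1 := (h.shift.shift).pow18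
  obtain ⟨h1, h2, h3, h4, h5⟩ := h
  have b2 : g₁ ^ 2 = (g₂ ^ 2)⁻¹ * (g₀ ^ 2)⁻¹ := by
    calc g₁ ^ 2 = (g₂ ^ 2)⁻¹ * (g₂ ^ 2 * g₁ ^ 2 * g₀ ^ 2) * (g₀ ^ 2)⁻¹ := by group
      _ = (g₂ ^ 2)⁻¹ * 1 * (g₀ ^ 2)⁻¹ := by rw [h4]
      _ = (g₂ ^ 2)⁻¹ * (g₀ ^ 2)⁻¹ := by group
  have e2 : g₀ ^ 4 = (g₂ ^ 2)⁻¹ * (g₀ ^ 2)⁻¹ * g₂ ^ 2 := by rw [h1, b2]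
  have e3 : g₂ ^ 4 = g₀ ^ 2 * ((g₂ ^ 2)⁻¹ * (g₀ ^ 2)⁻¹) := by rw [h3, b2]
  -- conjugation of g₂² by g₀² gives g₂⁻⁴
  have conj2 : g₀ ^ 2 * g₂ ^ 2 * (g₀ ^ 2)⁻¹ = (g₂ ^ 4)⁻¹ := by
    rw [e3]; group
  -- hence g₂⁶ commutes with g₀²
  have comm6 : g₀ ^ 2 * g₂ ^ 6 * (g₀ ^ 2)⁻¹ = g₂ ^ 6 := by
    calc g₀ ^ 2 * g₂ ^ 6 * (g₀ ^ 2)⁻¹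
        = (g₀ ^ 2 * g₂ ^ 2 * (g₀ ^ 2)⁻¹) * (g₀ ^ 2 * g₂ ^ 2 * (g₀ ^ 2)⁻¹) *
            (g₀ ^ 2 * g₂ ^ 2 * (g₀ ^ 2)⁻¹) := by group
      _ = (g₂ ^ 4)⁻¹ * (g₂ ^ 4)⁻¹ * (g₂ ^ 4)⁻¹ := by rw [conj2]
      _ = (g₂ ^ 18)⁻¹ * g₂ ^ 6 := by group
      _ = 1⁻¹ * g₂ ^ 6 := by rw [hc18]
      _ = g₂ ^ 6 := by group
  have comm6' : g₀ ^ 2 * g₂ ^ 6 = g₂ ^ 6 * g₀ ^ 2 := by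
    calc g₀ ^ 2 * g₂ ^ 6 = g₀ ^ 2 * g₂ ^ 6 * (g₀ ^ 2)⁻¹ * g₀ ^ 2 := by group
      _ = g₂ ^ 6 * g₀ ^ 2 := by rw [comm6]
  have main : g₀ ^ 8 = g₂ ^ 2 * g₀ ^ 2 * g₂⁻¹ ^ 2 := by
    have e8 : g₀ ^ 8 = (g₂ ^ 2)⁻¹ * (g₀ ^ 4)⁻¹ * g₂ ^ 2 := by
      calc g₀ ^ 8 = g₀ ^ 4 * g₀ ^ 4 := by group
        _ = ((g₂ ^ 2)⁻¹ * (g₀ ^ 2)⁻¹ * g₂ ^ 2) *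
              ((g₂ ^ 2)⁻¹ * (g₀ ^ 2)⁻¹ * g₂ ^ 2) := by rw [e2]
        _ = (g₂ ^ 2)⁻¹ * (g₀ ^ 4)⁻¹ * g₂ ^ 2 := by group
    calc g₀ ^ 8 = (g₂ ^ 2)⁻¹ * (g₀ ^ 4)⁻¹ * g₂ ^ 2 := e8
      _ = (g₂ ^ 2)⁻¹ * ((g₂ ^ 2)⁻¹ * (g₀ ^ 2)⁻¹ * g₂ ^ 2)⁻¹ * g₂ ^ 2 := by rw [e2]
      _ = g₂ ^ 2 * (g₂ ^ 6)⁻¹ * (g₀ ^ 2 * g₂ ^ 6) * (g₂ ^ 2)⁻¹ := by group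
      _ = g₂ ^ 2 * (g₂ ^ 6)⁻¹ * (g₂ ^ 6 * g₀ ^ 2) * (g₂ ^ 2)⁻¹ := by rw [comm6']
      _ = g₂ ^ 2 * g₀ ^ 2 * g₂⁻¹ ^ 2 := by group
  refine ⟨main, ?_⟩
  calc g₀ ^ 24 = g₀ ^ 18 * g₀ ^ 6 := by group
    _ = 1 * g₀ ^ 6 := by rw [ha18]
    _ = g₀ ^ 6 := by group
end

section
/- Let K be a field, A an associative unital K-algebra, u ∈ K, and let b₀, b₁, b₂, f₀, f₁, f₂, f̄₀, f̄₁, f̄₂ ∈ A be units, and let Γ₀, Γ₁, Γ₂ ∈ A be units. Suppose the evolution equations hold: b₀f̄₀ = u·(b₂⁻²Γ₂b₁f₁Γ₀⁻¹b₀²), b₁f̄₁ = u·(b₀⁻²Γ₀b₂f₂Γ₁⁻¹b₁²), b₂f̄₂ = u·(b₁⁻²Γ₁b₀f₀Γ₂⁻¹b₂²). If b₀f₀b₁f₁b₂f₂ = λ·1 for some scalar λ ∈ K, then b₀f̄₀·b₁f̄₁·b₂f̄₂ = u³λ·1. (With u = q^{2/3} and λ = qc², this says the product evolves as qc² ↦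 q(qc)², i.e. c̄ = qc.) -/
private lemma sq_mul_inv_sq_cancel {A : Type*} [Ring A] (w : Aˣ) (x : A) :
    (w : A) ^ 2 * ((↑(w⁻¹) : A) ^ 2 * x) = x := by
  rw [sq, sq]
  simp [mul_assoc, Units.mul_inv_cancel_left]

private lemma inv_sq_mul_sq_cancel {A : Type*} [Ring A] (w : Aˣ) (x : A) :
    (↑(w⁻¹) : A) ^ 2 * ((w : A) ^ 2 * x) = x := by
  rw [sq, sq]
  simp [mul_assoc, Units.inv_mul_cancel_left]

/-- For the noncommutative q-Painlevé IV map on an associative unital algebra `A` over a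
field `K`, if `b₀f₀b₁f₁b₂f₂ = λ·1` then the updated product satisfies
`b₀fb₀·b₁fb₁·b₂fb₂ = u³λ·1`.  Here `u` plays the role of `q^(2/3)`, so with `λ = qc²`
this says `c̄ = qc`. -/
theorem product_evolution {K A : Type*} [Field K] [Ring A] [Algebra K A]
    (b₀ b₁ b₂ Γ₀ Γ₁ Γ₂ : Aˣ) (f₀ f₁ f₂ fb₀ fb₁ fb₂ : A)
    (hf₀ : IsUnit f₀) (hf₁ : IsUnit f₁) (hf₂ : IsUnit f₂)
    (hfb₀ : IsUnit fb₀) (hfb₁ : IsUnit fb₁) (hfb₂ : IsUnit fb₂)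
    (u lam : K)
    (e₀ : (b₀ : A) * fb₀ =
      u • ((↑(b₂⁻¹) : A) ^ 2 * (Γ₂ : A) * (b₁ : A) * f₁ * (↑(Γ₀⁻¹) : A) * (b₀ : A) ^ 2))
    (e₁ : (b₁ : A) * fb₁ =
      u • ((↑(b₀⁻¹) : A) ^ 2 * (Γ₀ : A) * (b₂ : A) * f₂ * (↑(Γ₁⁻¹) : A) * (b₁ : A) ^ 2))
    (e₂ : (b₂ : A) * fb₂ =
      u • ((↑(b₁⁻¹) : A) ^ 2 * (Γ₁ : A) * (b₀ : A) * f₀ * (↑(Γ₂⁻¹) : A) * (b₂ : A) ^ 2))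
    (hprod : (b₀ : A) * f₀ * (b₁ : A) * f₁ * (b₂ : A) * f₂ = lam • (1 : A)) :
    ((b₀ : A) * fb₀) * ((b₁ : A) * fb₁) * ((b₂ : A) * fb₂) = (u ^ 3 * lam) • (1 : A) := by
  -- cyclic version of hprod
  obtain ⟨X, hX⟩ := (b₀.isUnit.mul hf₀)
  have key : (b₁ : A) * (f₁ * ((b₂ : A) * (f₂ * ((b₀ : A) * f₀)))) = lam • 1 := by
    have hx : ((b₀ : A) * f₀) * ((b₁ : A) * (f₁ * ((b₂ : A) * f₂))) = lam • 1 := by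
      rw [← hprod]; noncomm_ring
    rw [← hX] at hx ⊢
    calc (b₁ : A) * (f₁ * ((b₂ : A) * (f₂ * (X : A))))
        = (↑(X⁻¹) : A) * ((X : A) * ((b₁ : A) * (f₁ * ((b₂ : A) * (f₂ * (X : A)))))) := by
          rw [Units.inv_mul_cancel_left]
      _ = (↑(X⁻¹) : A) * (((X : A) * ((b₁ : A) * (f₁ * ((b₂ : A) * f₂)))) * (X : A)) := by
          noncomm_ring
      _ = (↑(X⁻¹) : A) * ((lam • (1 : A)) * (X : A)) := by rw [hx]
      _ = lam • 1 := by simp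
  have keyX : ∀ x : A,
      (b₁ : A) * (f₁ * ((b₂ : A) * (f₂ * ((b₀ : A) * (f₀ * x))))) = lam • x := by
    intro x
    have : ((b₁ : A) * (f₁ * ((b₂ : A) * (f₂ * ((b₀ : A) * f₀))))) * x = (lam • 1) * x := by
      rw [key]
    simpa [mul_assoc, smul_mul_assoc] using this
  rw [e₀, e₁, e₂]
  simp only [smul_mul_assoc, mul_smul_comm, smul_smul]
  rw [show u * (u * u) = u ^ 3 by ring, mul_smul]
  congr 1
  simp only [mul_assoc, sq_mul_inv_sq_cancel, Units.inv_mul_cancel_left,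
    Units.mul_inv_cancel_left]
  rw [keyX, mul_smul_comm, mul_smul_comm, Units.mul_inv_cancel_left, ← Units.val_pow_eq_pow_val,
    ← Units.val_pow_eq_pow_val, inv_pow, Units.inv_mul]
end

section
/- Let K be a field and A an associative unital K-algebra. Let b₀, b₁, b₂, f₀, f₁, f₂, f̄₀, f̄₁, f̄₂ ∈ A with b₀, b₁, b₂ units, define Γᵢ := 1 + bᵢ³fᵢ + bᵢ³bᵢ₊₁³fᵢfᵢ₊₁ (indices mod 3) and assume each Γᵢ is a unit. Let c, u ∈ K be nonzero scalars. For x ∈ K define the 3×3 matrices over A: L(x) with rows ((1+x²)·1, c·b₀f₀, 0), (0, (1+x²)·1, c·b₁f₁), (c·b₂f₂, 0, (1+x²)·1); L̄(x) with rows ((1+x²)·1, cu⁻¹·b₀f̄₀, 0), (0, (1+x²)·1, cu⁻¹·b₁f̄₁), (cu⁻¹·b₂f̄₂, 0, (1+x²)·1); and M with rows (0, b₂⁻²Γ₂, 0), (0, 0, b₀⁻²Γ₀), (b₁⁻²Γ₁, 0, 0). Then the Lax compatibility condition M·L(x) = L̄(x)·M holds for all x ∈ K if and only if the three equations hold: b₀f̄₀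 = u·b₂⁻²Γ₂b₁f₁Γ₀⁻¹b₀², b₁f̄₁ = u·b₀⁻²Γ₀b₂f₂Γ₁⁻¹b₁², b₂f̄₂ = u·b₁⁻²Γ₁b₀f₀Γ₂⁻¹b₂². -/
open Matrix

lemma aux_smul_eq {K A : Type*} [Field K] [Ring A] [Algebra K A]
    (c u : K) (hc : c ≠ 0) (hu : u ≠ 0) (P Q R S : A)
    (hRS : R * S = 1) (hSR : S * R = 1) :
    c • P = (c * u⁻¹) • (Q * R) ↔ Q = u • (P * S) := by
  constructor
  · intro h
    have h2 : u • P = Q * R := by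
      have h3 := congrArg (fun z => (c⁻¹ * u) • z) h
      simp only [smul_smul] at h3
      rw [show c⁻¹ * u * c = u by field_simp, show c⁻¹ * u * (c * u⁻¹) = 1 by field_simp,
        one_smul] at h3
      exact h3
    have := congrArg (fun z => z * S) h2
    simp only [smul_mul_assoc, mul_assoc, hRS, mul_one] at this
    exact this.symm
  · intro h
    rw [h, smul_mul_assoc, smul_smul, mul_assoc P S R, hSR, mul_one,
      show c * u⁻¹ * u = c by field_simp]

lemma aux_units {A : Type*} [Ring A] (b Γ : Aˣ) :
    ((↑(b⁻¹) : A) ^ 2 * ↑Γ) * (↑Γ⁻¹ * (↑b : A) ^ 2) = 1 ∧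
    (↑Γ⁻¹ * (↑b : A) ^ 2) * ((↑(b⁻¹) : A) ^ 2 * ↑Γ) = 1 := by
  constructor <;> simp [sq, mul_assoc]

/-- The Lax compatibility condition `M · L(x) = L̄(x) · M` (for all values of the spectral
parameter `x`) is equivalent to the three equations of the noncommutative q-Painlevé IV
map.  Here `A` is a (possibly noncommutative) associative unital algebra over a field
`K`, the scalars `c` and `u` play the roles of `t^(-2/3)` and `q^(2/3)`, and
`Γᵢ = 1 + bᵢ³fᵢ + bᵢ³bᵢ₊₁³fᵢfᵢ₊₁` (indices mod 3) are assumed to be units. -/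
theorem lax_compatibility_iff {K A : Type*} [Field K] [Ring A] [Algebra K A]
    (b₀ b₁ b₂ Γ₀ Γ₁ Γ₂ : Aˣ) (f₀ f₁ f₂ fb₀ fb₁ fb₂ : A)
    (hΓ₀ : (Γ₀ : A) = 1 + (b₀ : A) ^ 3 * f₀ + (b₀ : A) ^ 3 * (b₁ : A) ^ 3 * f₀ * f₁)
    (hΓ₁ : (Γ₁ : A) = 1 + (b₁ : A) ^ 3 * f₁ + (b₁ : A) ^ 3 * (b₂ : A) ^ 3 * f₁ * f₂)
    (hΓ₂ : (Γ₂ : A) = 1 + (b₂ : A) ^ 3 * f₂ + (b₂ : A) ^ 3 * (b₀ : A) ^ 3 * f₂ * f₀)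
    (c u : K) (hc : c ≠ 0) (hu : u ≠ 0) :
    (∀ x : K,
      (!![(0 : A), (↑(b₂⁻¹) : A) ^ 2 * (Γ₂ : A), 0;
          0, 0, (↑(b₀⁻¹) : A) ^ 2 * (Γ₀ : A);
          (↑(b₁⁻¹) : A) ^ 2 * (Γ₁ : A), 0, 0] *
        !![(1 + x ^ 2) • (1 : A), c • ((b₀ : A) * f₀), 0;
           0, (1 + x ^ 2) • (1 : A), c • ((b₁ : A) * f₁);
           c • ((b₂ : A) * f₂), 0, (1 + x ^ 2) • (1 : A)]) =
      (!![(1 + x ^ 2) • (1 : A), (c * u⁻¹) • ((b₀ : A) * fb₀), 0;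
          0, (1 + x ^ 2) • (1 : A), (c * u⁻¹) • ((b₁ : A) * fb₁);
          (c * u⁻¹) • ((b₂ : A) * fb₂), 0, (1 + x ^ 2) • (1 : A)] *
        !![(0 : A), (↑(b₂⁻¹) : A) ^ 2 * (Γ₂ : A), 0;
           0, 0, (↑(b₀⁻¹) : A) ^ 2 * (Γ₀ : A);
           (↑(b₁⁻¹) : A) ^ 2 * (Γ₁ : A), 0, 0])) ↔
    ((b₀ : A) * fb₀ =
        u • ((↑(b₂⁻¹) : A) ^ 2 * (Γ₂ : A) * (b₁ : A) * f₁ * (↑(Γ₀⁻¹) : A) * (b₀ : A) ^ 2) ∧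
      (b₁ : A) * fb₁ =
        u • ((↑(b₀⁻¹) : A) ^ 2 * (Γ₀ : A) * (b₂ : A) * f₂ * (↑(Γ₁⁻¹) : A) * (b₁ : A) ^ 2) ∧
      (b₂ : A) * fb₂ =
        u • ((↑(b₁⁻¹) : A) ^ 2 * (Γ₁ : A) * (b₀ : A) * f₀ * (↑(Γ₂⁻¹) : A) * (b₂ : A) ^ 2)) := by
  constructor
  · intro h
    have h0 := h 0
    have h02 := congrFun (congrFun h0 0) 2
    have h10 := congrFun (congrFun h0 1) 0
    have h21 := congrFun (congrFun h0 2) 1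
    simp [Matrix.mul_apply, Fin.sum_univ_three, mul_smul_comm, smul_mul_assoc,
      Matrix.vecHead, Matrix.vecTail]
      at h02 h10 h21
    refine ⟨?_, ?_, ?_⟩
    · simpa [mul_assoc] using
        (aux_smul_eq c u hc hu _ _ _ _ (aux_units b₀ Γ₀).1 (aux_units b₀ Γ₀).2).1 h02
    · simpa [mul_assoc] using
        (aux_smul_eq c u hc hu _ _ _ _ (aux_units b₁ Γ₁).1 (aux_units b₁ Γ₁).2).1 h10
    · simpa [mul_assoc] using
        (aux_smul_eq c u hc hu _ _ _ _ (aux_units b₂ Γ₂).1 (aux_units b₂ Γ₂).2).1 h21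
  · rintro ⟨h1, h2, h3⟩ x
    ext i j
    fin_cases i <;> fin_cases j <;>
      simp [Matrix.mul_apply, Fin.sum_univ_three, mul_smul_comm, smul_mul_assoc,
        Matrix.vecHead, Matrix.vecTail]
    · refine (aux_smul_eq c u hc hu _ _ _ _ (aux_units b₀ Γ₀).1 (aux_units b₀ Γ₀).2).2 ?_
      simpa [mul_assoc] using h1
    · refine (aux_smul_eq c u hc hu _ _ _ _ (aux_units b₁ Γ₁).1 (aux_units b₁ Γ₁).2).2 ?_
      simpa [mul_assoc] using h2
    · refine (aux_smul_eq c u hc hu _ _ _ _ (aux_units b₂ Γ₂).1 (aux_units b₂ Γ₂).2).2 ?_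
      simpa [mul_assoc] using h3
end
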